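/- Let V be a finite vertex set, and let the edge set of the complete graph on V be partitioned as O ∪ E ('odd' and 'even' edges). Let H be a set of edges such that: (1) E ⊆ H; (2) H contains a maximal forest T of the graph (V, O); (3) H ∩ E = E and H ∩ O ⊆ O; and (4) for every edge e = {u,v} of O, if there exists a cycle C through e in (V, (H ∩ O) ∪ {e}) such that no chord of C lies in O, then e ∈ H. Then H equals the full edge set of the complete graph on V. -/

import Mathlib

/-!
Let `G` be the graph of odd edges. Every odd edge outside the maximal forest `T` closes a cycle
with a path of `T`, whose edges lie in `H`. It therefore suffices to show that `H` is closed under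
completing cycles of `G`: if all edges of a cycle but `e` lie in `H`, so does `e`. By condition (4)
this holds for chordless cycles, and a cycle with a chord `f` splits along `f` into two shorter
cycles; induction on the length puts `f` in `H` using the half avoiding `e`, and then `e` using
the other half.
-/

namespace SimpleGraph

variable {V : Type*} {G : SimpleGraph V}

namespace Walk

lemma IsCycle.exists_isPath_split {v x y : V} {c : G.Walk v v} (hc : c.IsCycle)
    (hx : x ∈ c.support) (hy : y ∈ c.support) (hxy : x ≠ y) :
    ∃ p q : G.Walk x y, p.IsPath ∧ q.IsPath ∧ p.length + q.length = c.length ∧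
      p.edges.Disjoint q.edges ∧ ∀ e, e ∈ c.edges ↔ e ∈ p.edges ∨ e ∈ q.edges := by
  classical
  set c' := c.rotate x hx
  have hc' : c'.IsCycle := hc.rotate hx
  have hy' : y ∈ c'.support := (c.mem_support_rotate_iff x hx).mpr hy
  have hsplit := c'.take_spec hy'
  refine ⟨c'.takeUntil y hy', (c'.dropUntil y hy').reverse, hc'.isPath_takeUntil hy',
    ?_, ?_, ?_, ?_⟩
  · have hcyc : ((c'.takeUntil y hy').append (c'.dropUntil y hy')).IsCycle := by rwa [hsplit]
    exact (hcyc.isPath_of_append_right (not_nil_of_ne hxy)).reverse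
  · rw [length_reverse, ← length_append, hsplit, length_rotate]
  · rw [edges_reverse, List.disjoint_reverse_right]
    exact hc'.isTrail.disjoint_edges_takeUntil_dropUntil hy'
  · intro e
    have hedges := congrArg edges hsplit
    rw [edges_append] at hedges
    rw [← (c.rotate_edges x hx).perm.mem_iff]
    change e ∈ c'.edges ↔ _
    rw [← hedges, List.mem_append, edges_reverse, List.mem_reverse]

end Walk

open Walk

def IsChordlessClosed (G : SimpleGraph V) (S : Set (Sym2 V)) : Prop :=
  ∀ ⦃v : V⦄ (c : G.Walk v v), c.IsCycle → c.IsChordless →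
    ∀ e ∈ c.edges, (∀ a ∈ c.edges, a ≠ e → a ∈ S) → e ∈ S

theorem IsChordlessClosed.mem_of_isCycle {S : Set (Sym2 V)} (hS : G.IsChordlessClosed S)
    {v : V} {c : G.Walk v v} (hc : c.IsCycle) {e : Sym2 V} (he : e ∈ c.edges)
    (hcS : ∀ a ∈ c.edges, a ≠ e → a ∈ S) : e ∈ S := by
  induction hn : c.length using Nat.strong_induction_on generalizing v c e with
  | _ n ih =>
  by_cases hch : c.IsChordless
  · exact hS c hc hch e he hcS
  rw [isChordless_iff_forall_mem_edges] at hch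
  push Not at hch
  obtain ⟨x, y, hx, hy, hxy, hchord⟩ := hch
  obtain ⟨p, q, hp, hq, hlen, hdisj, hmem⟩ := hc.exists_isPath_split hx hy hxy.ne
  wlog hep : e ∈ p.edges generalizing p q
  · exact this q p hq hp (by omega) hdisj.symm (fun a ↦ (hmem a).trans or_comm)
      (((hmem e).mp he).resolve_left hep)
  have hclose : ∀ r : G.Walk x y, r.IsPath → (∀ a ∈ r.edges, a ∈ c.edges) →
      (cons hxy.symm r).IsCycle := fun r hr hrc ↦
    Path.cons_isCycle ⟨r, hr⟩ hxy.symm fun h ↦ hchord (hrc _ (Sym2.eq_swap ▸ h))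
  have hpc := hclose p hp fun a ha ↦ (hmem a).mpr (.inl ha)
  have hqc := hclose q hq fun a ha ↦ (hmem a).mpr (.inr ha)
  have hp3 := hpc.three_le_length
  have hq3 := hqc.three_le_length
  rw [length_cons] at hp3 hq3
  have hchordS : s(y, x) ∈ S := by
    refine ih _ (by rw [length_cons]; omega) hqc (List.mem_cons_self ..) (fun a ha hne ↦ ?_) rfl
    have haq : a ∈ q.edges := (List.mem_cons.mp ha).resolve_left hne
    exact hcS a ((hmem a).mpr (.inr haq)) fun hae ↦ hdisj (hae ▸ hep) haq
  refine ih _ (by rw [length_cons]; omega) hpc (List.mem_cons_of_mem _ hep)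
    (fun a ha hne ↦ ?_) rfl
  rcases List.mem_cons.mp ha with rfl | hap
  · exact hchordS
  · exact hcS a ((hmem a).mpr (.inl hap)) hne

lemma exists_isCycle_of_maximal_isAcyclic {T : SimpleGraph V}
    (hT : Maximal (fun H ↦ H ≤ G ∧ H.IsAcyclic) T) {u v : V} (huv : G.Adj u v)
    (hTuv : ¬T.Adj u v) :
    ∃ c : G.Walk v v, c.IsCycle ∧ s(u, v) ∈ c.edges ∧
      ∀ a ∈ c.edges, a ≠ s(u, v) → a ∈ T.edgeSet := by
  have hreach : T.Reachable u v := by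
    rw [reachable_eq_of_maximal_isAcyclic T hT]
    exact huv.reachable
  obtain ⟨p, hp⟩ := hreach.exists_isPath
  have hpT : ∀ a ∈ (p.mapLe hT.prop.1).edges, a ∈ T.edgeSet := by
    rw [edges_mapLe_eq_edges]
    exact p.edges_subset_edgeSet
  refine ⟨cons huv.symm (p.mapLe hT.prop.1), ?_, ?_, fun a ha hne ↦ ?_⟩
  · refine Path.cons_isCycle ⟨_, hp.mapLe _⟩ huv.symm fun h ↦ hTuv ?_
    rw [← mem_edgeSet, Sym2.eq_swap]
    exact hpT _ h
  · rw [edges_cons, Sym2.eq_swap]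
    exact List.mem_cons_self ..
  · rw [edges_cons, Sym2.eq_swap] at ha
    exact hpT a ((List.mem_cons.mp ha).resolve_left hne)

lemma isChordlessClosed_fromEdgeSet {O H : Set (Sym2 V)}
    (h : ∀ e ∈ O,
      (∃ (v : V) (C : (fromEdgeSet ((H ∩ O) ∪ {e})).Walk v v),
        C.IsCycle ∧ e ∈ C.edges ∧
        ∀ x y : V, x ∈ C.support → y ∈ C.support → x ≠ y →
          s(x, y) ∉ C.edges → s(x, y) ∉ O) → e ∈ H) :
    (fromEdgeSet O).IsChordlessClosed H := by
  intro v c hc hch e he hcH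
  have hcO : ∀ a ∈ c.edges, a ∈ O ∧ ¬a.IsDiag := fun a ha ↦ by
    simpa only [edgeSet_fromEdgeSet, Set.mem_sdiff, Sym2.mem_diagSet] using
      c.edges_subset_edgeSet ha
  have hsub : ∀ a ∈ c.edges, a ∈ (fromEdgeSet ((H ∩ O) ∪ {e})).edgeSet := by
    intro a ha
    rw [edgeSet_fromEdgeSet, Set.mem_sdiff, Sym2.mem_diagSet]
    by_cases hae : a = e
    · exact ⟨.inr hae, (hcO a ha).2⟩
    · exact ⟨.inl ⟨hcH a ha hae, (hcO a ha).1⟩, (hcO a ha).2⟩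
  refine h e (hcO e he).1 ⟨v, c.transfer _ hsub, hc.transfer hsub, ?_, ?_⟩
  · rwa [edges_transfer]
  · intro x y hx hy hxy hxyc hxyO
    rw [support_transfer] at hx hy
    rw [edges_transfer] at hxyc
    exact hxyc (hch.mem_edges hx hy ((fromEdgeSet_adj O).mpr ⟨hxyO, hxy⟩))

end SimpleGraph

theorem stmt_7_general {V : Type*}
    (O E H : Set (Sym2 V))
    -- O ∪ E partitions the edge set of the complete graph on V
    (hpart : O ∪ E = {e : Sym2 V | ¬ e.IsDiag})
    -- (1) E ⊆ H and (3) H consists of odd and even edges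
    (hEH : E ⊆ H) (hHOE : H ⊆ O ∪ E)
    -- (2) H contains a maximal forest T of the graph (V, O)
    (hforest : ∃ T : SimpleGraph V, T ≤ SimpleGraph.fromEdgeSet O ∧ T.IsAcyclic ∧
        (∀ T' : SimpleGraph V, T ≤ T' → T' ≤ SimpleGraph.fromEdgeSet O →
          T'.IsAcyclic → T' = T) ∧ T.edgeSet ⊆ H)
    -- (4) chordless-cycle condition
    (hchordless : ∀ e ∈ O,
        (∃ (v : V) (C : (SimpleGraph.fromEdgeSet ((H ∩ O) ∪ {e})).Walk v v),
          C.IsCycle ∧ e ∈ C.edges ∧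
          ∀ x y : V, x ∈ C.support → y ∈ C.support → x ≠ y →
            s(x, y) ∉ C.edges → s(x, y) ∉ O) →
        e ∈ H) :
    H = O ∪ E := by
  obtain ⟨T, hTO, hTac, hTmax, hTH⟩ := hforest
  have hT : Maximal (fun T' ↦ T' ≤ SimpleGraph.fromEdgeSet O ∧ T'.IsAcyclic) T :=
    ⟨⟨hTO, hTac⟩, fun T' hT' hle ↦ (hTmax T' hle hT'.1 hT'.2).le⟩
  have hclosed := SimpleGraph.isChordlessClosed_fromEdgeSet hchordless
  refine hHOE.antisymm (Set.union_subset (fun e heO ↦ ?_) hEH)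
  induction e using Sym2.ind with
  | _ u v =>
  have huv : u ≠ v := by
    have huvE : s(u, v) ∈ O ∪ E := .inl heO
    simpa [hpart] using huvE
  by_cases hTuv : T.Adj u v
  · exact hTH hTuv
  have hadj : (SimpleGraph.fromEdgeSet O).Adj u v :=
    (SimpleGraph.fromEdgeSet_adj O).mpr ⟨heO, huv⟩
  obtain ⟨c, hc, hec, hcT⟩ := SimpleGraph.exists_isCycle_of_maximal_isAcyclic hT hadj hTuv
  exact hclosed.mem_of_isCycle hc hec fun a ha hne ↦ hTH (hcT a ha hne)

theorem stmt_7 {V : Type*} [Fintype V] [DecidableEq V]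
    (O E H : Set (Sym2 V))
    -- O ∪ E partitions the edge set of the complete graph on V
    (hpart : O ∪ E = {e : Sym2 V | ¬ e.IsDiag}) (hdisj : O ∩ E = ∅)
    -- (1) E ⊆ H and (3) H consists of odd and even edges
    (hEH : E ⊆ H) (hHOE : H ⊆ O ∪ E)
    -- (2) H contains a maximal forest T of the graph (V, O)
    (hforest : ∃ T : SimpleGraph V, T ≤ SimpleGraph.fromEdgeSet O ∧ T.IsAcyclic ∧
        (∀ T' : SimpleGraph V, T ≤ T' → T' ≤ SimpleGraph.fromEdgeSet O →
          T'.IsAcyclic → T' = T) ∧ T.edgeSet ⊆ H)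
    -- (4) chordless-cycle condition
    (hchordless : ∀ e ∈ O,
        (∃ (v : V) (C : (SimpleGraph.fromEdgeSet ((H ∩ O) ∪ {e})).Walk v v),
          C.IsCycle ∧ e ∈ C.edges ∧
          ∀ x y : V, x ∈ C.support → y ∈ C.support → x ≠ y →
            s(x, y) ∉ C.edges → s(x, y) ∉ O) →
        e ∈ H) :
    H = O ∪ E :=
  stmt_7_general O E H hpart hEH hHOE hforest hchordless
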